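/- For every integer t ≥ 6, the odd Hadwiger number of the direct product of the complete graphs K_t and K_3 equals t + 2: oh(K_t × K_3) = t + 2. -/

import Mathlib

open SimpleGraph

/-- `H` is an odd minor of `G`: there are pairwise vertex-disjoint subtrees of `G`, one for
each vertex of `H`, and a 2-colouring of the vertices which is proper on each tree, such that
for every edge of `H` there is a monochromatic edge of `G` between the corresponding trees. -/
def IsOddMinorOf {W V : Type*} (H : SimpleGraph W) (G : SimpleGraph V) : Prop :=
  ∃ (T : W → G.Subgraph) (c : V → Fin 2),
    (∀ w, (T w).coe.IsTree) ∧
    (Pairwise fun w w' => Disjoint (T w).verts (T w').verts) ∧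
    (∀ w, ∀ x y, (T w).Adj x y → c x ≠ c y) ∧
    (∀ w w', H.Adj w w' →
      ∃ x y, x ∈ (T w).verts ∧ y ∈ (T w').verts ∧ G.Adj x y ∧ c x = c y)

/-- The odd Hadwiger number of `G`: the largest `r` such that `K_r` is an odd minor of `G`. -/
noncomputable def oddHadwiger {V : Type*} [Fintype V] (G : SimpleGraph V) : ℕ :=
  sSup {r : ℕ | IsOddMinorOf (⊤ : SimpleGraph (Fin r)) G}

/-- The Cartesian product `G □ H`. -/
def cartProd {α β : Type*} (G : SimpleGraph α) (H : SimpleGraph β) : SimpleGraph (α × β) where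
  Adj x y := (x.1 = y.1 ∧ H.Adj x.2 y.2) ∨ (x.2 = y.2 ∧ G.Adj x.1 y.1)
  symm := by
    constructor
    rintro x y (⟨h1, h2⟩ | ⟨h1, h2⟩)
    · exact Or.inl ⟨h1.symm, h2.symm⟩
    · exact Or.inr ⟨h1.symm, h2.symm⟩
  loopless := by
    constructor
    rintro x (⟨_, h⟩ | ⟨_, h⟩)
    · exact H.irrefl h
    · exact G.irrefl h

/-- The strong product `G ⊠ H`. -/
def strongProd {α β : Type*} (G : SimpleGraph α) (H : SimpleGraph β) : SimpleGraph (α × β) where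
  Adj x y := (x.1 = y.1 ∧ H.Adj x.2 y.2) ∨ (x.2 = y.2 ∧ G.Adj x.1 y.1) ∨
    (G.Adj x.1 y.1 ∧ H.Adj x.2 y.2)
  symm := by
    constructor
    rintro x y (⟨h1, h2⟩ | ⟨h1, h2⟩ | ⟨h1, h2⟩)
    · exact Or.inl ⟨h1.symm, h2.symm⟩
    · exact Or.inr (Or.inl ⟨h1.symm, h2.symm⟩)
    · exact Or.inr (Or.inr ⟨h1.symm, h2.symm⟩)
  loopless := by
    constructor
    rintro x (⟨_, h⟩ | ⟨_, h⟩ | ⟨h, _⟩)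
    · exact H.irrefl h
    · exact G.irrefl h
    · exact G.irrefl h

/-- The lexicographic product `G ∘ H`. -/
def lexProd {α β : Type*} (G : SimpleGraph α) (H : SimpleGraph β) : SimpleGraph (α × β) where
  Adj x y := G.Adj x.1 y.1 ∨ (x.1 = y.1 ∧ H.Adj x.2 y.2)
  symm := by
    constructor
    rintro x y (h | ⟨h1, h2⟩)
    · exact Or.inl h.symm
    · exact Or.inr ⟨h1.symm, h2.symm⟩
  loopless := by
    constructor
    rintro x (h | ⟨_, h⟩)
    · exact G.irrefl h
    · exact H.irrefl h

/-- The direct (tensor) product `G × H`. -/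
def dirProd {α β : Type*} (G : SimpleGraph α) (H : SimpleGraph β) : SimpleGraph (α × β) where
  Adj x y := G.Adj x.1 y.1 ∧ H.Adj x.2 y.2
  symm := by
    constructor
    rintro x y ⟨h1, h2⟩
    exact ⟨h1.symm, h2.symm⟩
  loopless := by
    constructor
    rintro x ⟨h, _⟩
    exact G.irrefl h

/-!
Upper bound. Let `T w` be the branch trees and `c` the colouring of a model of `K_m` in `G × K₃`.
Assign to each tree the injections `g : Fin 2 → Fin 3` with `x.2 = g (c x)` for all `x ∈ T w`.
A monochromatic edge between two trees joins different rows, so these sets are pairwise disjoint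
subsets of the six injections, while a tree with `k ≤ 2` vertices admits at least `3 - k` of them
(a single vertex fixes one value of `g`, a properly coloured edge fixes both). Summing,
`3m ≤ 3|V(G)| + 6`.

Lower bound. On `t - 4` columns take the paths `(i,0) — (σ i,1) — (i,2)`, coloured `1, 0, 1`,
for a fixed-point-free permutation `σ`; two such paths are linked through rows `0` and `2`.
The remaining `4 × 3` block is split into six properly coloured edges which are pairwise linked
by monochromatic edges, and each of them sees every path through its colour-`1` endpoint.
-/

section Graphs

variable {V : Type*} {G : SimpleGraph V}

@[simp]
lemma dirProd_adj {α β : Type*} {G : SimpleGraph α} {H : SimpleGraph β} {x y : α × β} :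
    (dirProd G H).Adj x y ↔ G.Adj x.1 y.1 ∧ H.Adj x.2 y.2 :=
  Iff.rfl

def SimpleGraph.Iso.dirProd {α α' β β' : Type*} {G : SimpleGraph α} {G' : SimpleGraph α'}
    {H : SimpleGraph β} {H' : SimpleGraph β'} (f : G ≃g G') (g : H ≃g H') :
    _root_.dirProd G H ≃g _root_.dirProd G' H' where
  toEquiv := f.toEquiv.prodCongr g.toEquiv
  map_rel_iff' := and_congr f.map_adj_iff g.map_adj_iff

lemma SimpleGraph.IsAcyclic.of_edgeSet_subset_pair {e₁ e₂ : Sym2 V}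
    (h : G.edgeSet ⊆ {e₁, e₂}) : G.IsAcyclic := by
  intro v c hc
  have hlen := (hc.edges_nodup.subperm (l₂ := [e₁, e₂]) fun e he => by
    simpa using h (c.edges_subset_edgeSet he)).length_le
  have := hc.three_le_length
  simp only [Walk.length_edges, List.length_cons, List.length_nil] at hlen
  omega

lemma SimpleGraph.isTree_coe_subgraphOfAdj_sup {a b d : V} (hab : G.Adj a b) (hbd : G.Adj b d) :
    (G.subgraphOfAdj hab ⊔ G.subgraphOfAdj hbd).coe.IsTree := by
  refine ⟨(Subgraph.connected_sup (Subgraph.subgraphOfAdj_connected hab).preconnected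
    (Subgraph.subgraphOfAdj_connected hbd).preconnected ⟨b, by simp⟩).coe, ?_⟩
  refine IsAcyclic.embedding (Subgraph.coeEmbeddingSpanningCoe _)
    (IsAcyclic.of_edgeSet_subset_pair (e₁ := s(a, b)) (e₂ := s(b, d)) ?_)
  simp

lemma SimpleGraph.Subgraph.Connected.adj_of_verts_eq_pair {H : G.Subgraph} (hH : H.Connected)
    {x y : V} (hxy : x ≠ y) (hv : H.verts = {x, y}) : H.Adj x y := by
  have : Nontrivial H.verts := by
    rw [hv]
    exact (Set.nontrivial_pair hxy).coe_sort
  obtain ⟨u, hu⟩ := hH.preconnected.exists_adj_of_nontrivial ⟨x, by simp [hv]⟩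
  have hu' : u ∈ ({x, y} : Set V) := hv ▸ H.edge_vert hu.symm
  rcases hu' with rfl | rfl
  · exact absurd rfl (H.adj_sub hu).ne
  · exact hu

end Graphs

lemma Set.sum_ncard_le_ncard_of_pairwise_disjoint {ι β : Type*} [Fintype ι] {s : ι → Set β}
    {t : Set β} (ht : t.Finite) (hst : ∀ i, s i ⊆ t)
    (hs : Pairwise fun i j => Disjoint (s i) (s j)) :
    ∑ i, (s i).ncard ≤ t.ncard := by
  rw [← finsum_eq_sum_of_fintype, ← Set.ncard_iUnion_of_finite (fun i => ht.subset (hst i)) hs]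
  exact Set.ncard_le_ncard (Set.iUnion_subset hst) ht

section OddMinor

variable {V V' W W' : Type*} {G : SimpleGraph V} {G' : SimpleGraph V'} {H : SimpleGraph W}
  {H' : SimpleGraph W'}

lemma IsOddMinorOf.comap (f : H'.Copy H) (h : IsOddMinorOf H G) : IsOddMinorOf H' G := by
  obtain ⟨T, c, htree, hdisj, hc, hlink⟩ := h
  exact ⟨T ∘ f, c, fun w => htree (f w), fun w w' hww => hdisj (f.injective.ne hww),
    fun w => hc (f w), fun w w' hww => hlink (f w) (f w') (f.toHom.map_adj hww)⟩

lemma IsOddMinorOf.map (f : G.Copy G') (h : IsOddMinorOf H G) : IsOddMinorOf H G' := by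
  obtain ⟨T, c, htree, hdisj, hc, hlink⟩ := h
  have hext : ∀ x, Function.extend f c 0 (f x) = c x := f.injective.extend_apply c 0
  refine ⟨fun w => (T w).map f.toHom, Function.extend f c 0,
    fun w => (f.isoSubgraphMap (T w)).isTree_iff.1 (htree w),
    fun w w' hww => (Set.disjoint_image_iff f.injective).2 (hdisj hww), ?_, ?_⟩
  · rintro w _ _ ⟨x, y, hxy, rfl, rfl⟩
    simpa only [Copy.toHom_apply, hext] using hc w x y hxy
  · intro w w' hww
    obtain ⟨x, y, hx, hy, hxy, hcxy⟩ := hlink w w' hww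
    exact ⟨f x, f y, Set.mem_image_of_mem _ hx, Set.mem_image_of_mem _ hy,
      f.toHom.map_adj hxy, by simpa only [Copy.toHom_apply, hext] using hcxy⟩

end OddMinor

lemma ncard_injective_fin_two_fin_three :
    {g : Fin 2 → Fin 3 | Function.Injective g}.ncard = 6 := by
  rw [Set.ncard_eq_toFinset_card', Set.toFinset_ofPred]
  decide

lemma ncard_injective_fin_two_fin_three_apply_eq (e : Fin 2) (r : Fin 3) :
    {g : Fin 2 → Fin 3 | Function.Injective g ∧ r = g e}.ncard = 2 := by
  rw [Set.ncard_eq_toFinset_card', Set.toFinset_ofPred]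
  revert e r
  decide

lemma exists_injective_fin_two_fin_three {e e' : Fin 2} {r r' : Fin 3} (he : e ≠ e')
    (hr : r ≠ r') : ∃ g : Fin 2 → Fin 3, Function.Injective g ∧ r = g e ∧ r' = g e' := by
  revert e e' r r'
  decide

section UpperBound

variable {α : Type*} {G : SimpleGraph α}

def rowAssignments (c : α × Fin 3 → Fin 2) (s : Set (α × Fin 3)) : Set (Fin 2 → Fin 3) :=
  {g | Function.Injective g ∧ ∀ x ∈ s, x.2 = g (c x)}

lemma disjoint_rowAssignments {c : α × Fin 3 → Fin 2} {s s' : Set (α × Fin 3)}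
    {x y : α × Fin 3} (hx : x ∈ s) (hy : y ∈ s') (hxy : (dirProd G ⊤).Adj x y)
    (hc : c x = c y) : Disjoint (rowAssignments c s) (rowAssignments c s') :=
  Set.disjoint_left.2 fun _ hg hg' => hxy.2 ((hg.2 x hx).trans (hc ▸ (hg'.2 y hy).symm))

lemma three_le_ncard_verts_add_ncard_rowAssignments [Finite α] {c : α × Fin 3 → Fin 2}
    {T : (dirProd G ⊤).Subgraph} (hT : T.Connected) (hc : ∀ x y, T.Adj x y → c x ≠ c y) :
    3 ≤ T.verts.ncard + (rowAssignments c T.verts).ncard := by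
  obtain h | h | h | h : T.verts.ncard = 0 ∨ T.verts.ncard = 1 ∨ T.verts.ncard = 2 ∨
      3 ≤ T.verts.ncard := by omega
  · exact absurd ((Set.ncard_eq_zero (Set.toFinite _)).1 h) hT.nonempty.ne_empty
  · obtain ⟨v, hv⟩ := Set.ncard_eq_one.1 h
    simp [hv, rowAssignments, ncard_injective_fin_two_fin_three_apply_eq]
  · obtain ⟨x, y, hxy, hv⟩ := Set.ncard_eq_two.1 h
    have hadj := hT.adj_of_verts_eq_pair hxy hv
    obtain ⟨g, hg, hgx, hgy⟩ :=
      exists_injective_fin_two_fin_three (hc x y hadj) (T.adj_sub hadj).2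
    have : 0 < (rowAssignments c T.verts).ncard :=
      (Set.ncard_pos (Set.toFinite _)).2 ⟨g, hg, by simp [hv, hgx, hgy]⟩
    omega
  · omega

theorem IsOddMinorOf.card_le_card_add_two {W : Type*} [Fintype W] [Finite α]
    (h : IsOddMinorOf (⊤ : SimpleGraph W) (dirProd G (⊤ : SimpleGraph (Fin 3)))) :
    Nat.card W ≤ Nat.card α + 2 := by
  obtain ⟨T, c, htree, hdisj, hc, hlink⟩ := h
  have hrows : Pairwise fun w w' =>
      Disjoint (rowAssignments c (T w).verts) (rowAssignments c (T w').verts) := fun w w' hww => by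
    obtain ⟨x, y, hx, hy, hxy, hcxy⟩ := hlink w w' hww
    exact disjoint_rowAssignments hx hy hxy hcxy
  have hverts := Set.sum_ncard_le_ncard_of_pairwise_disjoint Set.finite_univ
    (fun w => Set.subset_univ _) hdisj
  have hassign := Set.sum_ncard_le_ncard_of_pairwise_disjoint
    (t := {g | Function.Injective g}) (Set.toFinite _) (fun _ _ hg => hg.1) hrows
  have hcount : ∑ _w : W, 3 ≤ ∑ w, ((T w).verts.ncard + (rowAssignments c (T w).verts).ncard) :=
    Finset.sum_le_sum fun w _ =>
      three_le_ncard_verts_add_ncard_rowAssignments ⟨(htree w).connected⟩ (hc w)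
  rw [Finset.sum_add_distrib] at hcount
  simp only [Finset.sum_const, Finset.card_univ, smul_eq_mul, Set.ncard_univ, Nat.card_prod,
    Nat.card_eq_fintype_card (α := Fin 3), Fintype.card_fin] at hcount hverts
  rw [ncard_injective_fin_two_fin_three] at hassign
  rw [Nat.card_eq_fintype_card]
  omega

end UpperBound

namespace BlockMatching

def x : Fin 6 → Fin 4 × Fin 3 := ![(0, 0), (1, 0), (2, 1), (3, 1), (3, 2), (1, 2)]

def y : Fin 6 → Fin 4 × Fin 3 := ![(1, 1), (2, 2), (3, 0), (0, 2), (2, 0), (0, 1)]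

def colour (p : Fin 4 × Fin 3) : Fin 2 := ![![0, 1, 1], ![0, 1, 0], ![1, 0, 1], ![1, 0, 0]] p.1 p.2

lemma colour_x : ∀ j, colour (x j) = 0 := by decide

lemma colour_y : ∀ j, colour (y j) = 1 := by decide

lemma x_ne_y : ∀ j, (x j).1 ≠ (y j).1 ∧ (x j).2 ≠ (y j).2 := by decide

lemma disjoint : ∀ j j', j ≠ j' → ∀ p, p = x j ∨ p = y j → p ≠ x j' ∧ p ≠ y j' := by decide

lemma linked : ∀ j j', j ≠ j' →
    ((x j).1 ≠ (x j').1 ∧ (x j).2 ≠ (x j').2) ∨ ((y j).1 ≠ (y j').1 ∧ (y j).2 ≠ (y j').2) := by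
  decide

end BlockMatching

section Construction

variable {ι : Type*} {σ : Equiv.Perm ι}

def constructionColour : (ι ⊕ Fin 4) × Fin 3 → Fin 2
  | (.inl _, r) => ![1, 0, 1] r
  | (.inr k, r) => BlockMatching.colour (k, r)

lemma adj_inl_zero_inl_one (hσ : ∀ i, σ i ≠ i) (i : ι) :
    (dirProd (⊤ : SimpleGraph (ι ⊕ Fin 4)) (⊤ : SimpleGraph (Fin 3))).Adj
      (.inl i, 0) (.inl (σ i), 1) := by
  simpa using (hσ i).symm

lemma adj_inl_one_inl_two (hσ : ∀ i, σ i ≠ i) (i : ι) :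
    (dirProd (⊤ : SimpleGraph (ι ⊕ Fin 4)) (⊤ : SimpleGraph (Fin 3))).Adj
      (.inl (σ i), 1) (.inl i, 2) := by
  simpa using hσ i

def blockVertex (p : Fin 4 × Fin 3) : (ι ⊕ Fin 4) × Fin 3 := (.inr p.1, p.2)

lemma blockVertex_injective : Function.Injective (blockVertex (ι := ι)) := by
  rintro ⟨k, r⟩ ⟨k', r'⟩ h
  simpa [blockVertex] using h

@[simp]
lemma constructionColour_blockVertex (p : Fin 4 × Fin 3) :
    constructionColour (blockVertex (ι := ι) p) = BlockMatching.colour p :=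
  rfl

lemma adj_blockVertex {p q : Fin 4 × Fin 3} (h : p.1 ≠ q.1 ∧ p.2 ≠ q.2) :
    (dirProd (⊤ : SimpleGraph (ι ⊕ Fin 4)) (⊤ : SimpleGraph (Fin 3))).Adj
      (blockVertex p) (blockVertex q) := by
  simpa [blockVertex] using h

def pathTree (hσ : ∀ i, σ i ≠ i) (i : ι) :
    (dirProd (⊤ : SimpleGraph (ι ⊕ Fin 4)) (⊤ : SimpleGraph (Fin 3))).Subgraph :=
  subgraphOfAdj _ (adj_inl_zero_inl_one hσ i) ⊔ subgraphOfAdj _ (adj_inl_one_inl_two hσ i)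

def blockEdge (j : Fin 6) :
    (dirProd (⊤ : SimpleGraph (ι ⊕ Fin 4)) (⊤ : SimpleGraph (Fin 3))).Subgraph :=
  subgraphOfAdj _ (adj_blockVertex (BlockMatching.x_ne_y j))

lemma disjoint_pathTree (hσ : ∀ i, σ i ≠ i) {i i' : ι} (h : i ≠ i') :
    Disjoint (pathTree hσ i).verts (pathTree hσ i').verts := by
  simp [Set.disjoint_left, pathTree, h, σ.injective.ne h]

lemma disjoint_pathTree_blockEdge (hσ : ∀ i, σ i ≠ i) (i : ι) (j : Fin 6) :
    Disjoint (pathTree hσ i).verts (blockEdge j).verts := by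
  simp [Set.disjoint_left, pathTree, blockEdge, blockVertex]

lemma disjoint_blockEdge {j j' : Fin 6} (h : j ≠ j') :
    Disjoint (blockEdge (ι := ι) j).verts (blockEdge j').verts := by
  simp only [Set.disjoint_left, blockEdge, subgraphOfAdj_verts, Set.mem_insert_iff,
    Set.mem_singleton_iff, not_or]
  rintro _ (rfl | rfl)
  · simpa [blockVertex_injective.eq_iff] using BlockMatching.disjoint j j' h _ (.inl rfl)
  · simpa [blockVertex_injective.eq_iff] using BlockMatching.disjoint j j' h _ (.inr rfl)

lemma constructionColour_ne_of_pathTree_adj (hσ : ∀ i, σ i ≠ i) (i : ι) :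
    ∀ x y, (pathTree hσ i).Adj x y → constructionColour x ≠ constructionColour y := by
  intro x y h
  simp only [pathTree, Subgraph.sup_adj, subgraphOfAdj_adj, Sym2.eq_iff] at h
  rcases h with (⟨rfl, rfl⟩ | ⟨rfl, rfl⟩) | (⟨rfl, rfl⟩ | ⟨rfl, rfl⟩) <;> simp [constructionColour]

lemma constructionColour_ne_of_blockEdge_adj (j : Fin 6) :
    ∀ x y, (blockEdge (ι := ι) j).Adj x y → constructionColour x ≠ constructionColour y := by
  intro x y h
  simp only [blockEdge, subgraphOfAdj_adj, Sym2.eq_iff] at h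
  rcases h with ⟨rfl, rfl⟩ | ⟨rfl, rfl⟩ <;>
    simp [BlockMatching.colour_x, BlockMatching.colour_y]

lemma exists_link_pathTree (hσ : ∀ i, σ i ≠ i) {i i' : ι} (h : i ≠ i') :
    ∃ x y, x ∈ (pathTree hσ i).verts ∧ y ∈ (pathTree hσ i').verts ∧
      (dirProd ⊤ ⊤).Adj x y ∧ constructionColour x = constructionColour y :=
  ⟨(.inl i, 0), (.inl i', 2), by simp [pathTree], by simp [pathTree], by simpa using h, rfl⟩

lemma exists_link_pathTree_blockEdge (hσ : ∀ i, σ i ≠ i) (i : ι) (j : Fin 6) :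
    ∃ x y, x ∈ (pathTree hσ i).verts ∧ y ∈ (blockEdge j).verts ∧
      (dirProd ⊤ ⊤).Adj x y ∧ constructionColour x = constructionColour y := by
  have hy : constructionColour (blockVertex (ι := ι) (BlockMatching.y j)) = 1 :=
    BlockMatching.colour_y j
  by_cases h0 : (BlockMatching.y j).2 = 0
  · exact ⟨(.inl i, 2), _, by simp [pathTree], by simp [blockEdge], by simp [blockVertex, h0],
      hy.symm⟩
  · exact ⟨(.inl i, 0), _, by simp [pathTree], by simp [blockEdge],
      by simpa [blockVertex] using Ne.symm h0, hy.symm⟩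

lemma exists_link_blockEdge {j j' : Fin 6} (h : j ≠ j') :
    ∃ x y, x ∈ (blockEdge (ι := ι) j).verts ∧ y ∈ (blockEdge j').verts ∧
      (dirProd ⊤ ⊤).Adj x y ∧ constructionColour x = constructionColour y := by
  rcases BlockMatching.linked j j' h with hx | hy
  · exact ⟨_, _, by simp [blockEdge], by simp [blockEdge], adj_blockVertex hx,
      by simp [BlockMatching.colour_x]⟩
  · exact ⟨_, _, by simp [blockEdge], by simp [blockEdge], adj_blockVertex hy,
      by simp [BlockMatching.colour_y]⟩

theorem isOddMinorOf_top_sum_fin_six (hσ : ∀ i, σ i ≠ i) :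
    IsOddMinorOf (⊤ : SimpleGraph (ι ⊕ Fin 6))
      (dirProd (⊤ : SimpleGraph (ι ⊕ Fin 4)) (⊤ : SimpleGraph (Fin 3))) := by
  refine ⟨Sum.elim (pathTree hσ) blockEdge, constructionColour, ?_, ?_, ?_, ?_⟩
  · rintro (i | j)
    · exact isTree_coe_subgraphOfAdj_sup (adj_inl_zero_inl_one hσ i) (adj_inl_one_inl_two hσ i)
    · exact IsTree.coe_subgraphOfAdj (adj_blockVertex (BlockMatching.x_ne_y j))
  · rintro (i | j) (i' | j') h
    · exact disjoint_pathTree hσ (by simpa using h)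
    · exact disjoint_pathTree_blockEdge hσ i j'
    · exact (disjoint_pathTree_blockEdge hσ i' j).symm
    · exact disjoint_blockEdge (by simpa using h)
  · rintro (i | j)
    · exact constructionColour_ne_of_pathTree_adj hσ i
    · exact constructionColour_ne_of_blockEdge_adj j
  · rintro (i | j) (i' | j') h
    · exact exists_link_pathTree hσ (by simpa using h)
    · exact exists_link_pathTree_blockEdge hσ i j'
    · obtain ⟨x, y, hx, hy, hxy, hc⟩ := exists_link_pathTree_blockEdge hσ i' j
      exact ⟨y, x, hy, hx, hxy.symm, hc.symm⟩
    · exact exists_link_blockEdge (by simpa using h)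

end Construction

theorem stmt_11 (t : ℕ) (ht : 6 ≤ t) :
    oddHadwiger (dirProd (⊤ : SimpleGraph (Fin t)) (⊤ : SimpleGraph (Fin 3))) = t + 2 := by
  have hσ : ∀ i, finRotate (t - 4) i ≠ i := fun i =>
    Equiv.Perm.mem_support.1 (by simp [support_finRotate_of_le (by omega : 2 ≤ t - 4)])
  let columns : Fin (t - 4) ⊕ Fin 4 ≃ Fin t := finSumFinEquiv.trans (finCongr (by omega))
  let branches : Fin (t + 2) ≃ Fin (t - 4) ⊕ Fin 6 :=
    (finCongr (by omega)).trans finSumFinEquiv.symm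
  have hlower : IsOddMinorOf (⊤ : SimpleGraph (Fin (t + 2)))
      (dirProd (⊤ : SimpleGraph (Fin t)) (⊤ : SimpleGraph (Fin 3))) :=
    ((isOddMinorOf_top_sum_fin_six hσ).map
      (Iso.dirProd (Iso.completeGraph columns) Iso.refl).toCopy).comap
      (Iso.completeGraph branches).toCopy
  refine IsGreatest.csSup_eq ⟨hlower, fun r hr => ?_⟩
  simpa using hr.card_le_card_add_two
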